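/- arXiv:2511.22123 — 2 statements merged into one kernel-verified Lean document; each statement's English description precedes it below -/
import Mathlib

section
/- Let H be a real inner product space, m ≥ 1, u_1, …, u_m ∈ H, and U the Gram matrix U_{ij} = (1/m)⟨u_i, u_j⟩, with eigenvalues λ_1 ≥ λ_2 ≥ … ≥ λ_m (listed with multiplicity in decreasing order, associated to an orthonormal eigenbasis of ℝ^m). Then for every n with 1 ≤ n ≤ m and every orthonormal family ψ_1, …, ψ_n ∈ H, the captured energy is bounded by the sum of the n largest eigenvalues: (1/m) Σ_{k=1}^m Σ_{i=1}^n ⟨u_k, ψ_i⟩² ≤ Σ_{i=1}^n λ_i. -/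
/-!
Let `v_ℓ = Σ_k c_ℓk u_k`. Since `U c_q = λ_q c_q`, the `v_ℓ` are pairwise orthogonal with
`‖v_ℓ‖² = m λ_ℓ`, and since `(c_ℓk)` is an orthogonal matrix, `Σ_k ⟨u_k, x⟩² = Σ_ℓ ⟨v_ℓ, x⟩²`
for every `x`. The captured energy is therefore `Σ_ℓ λ_ℓ s_ℓ` with
`s_ℓ = Σ_i ⟨v_ℓ, ψ_i⟩² / ‖v_ℓ‖²`. Bessel's inequality, applied once to the `ψ_i` and once to the
normalised `v_ℓ`, gives `0 ≤ s_ℓ ≤ 1` and `Σ_ℓ s_ℓ ≤ n`; for such weights `Σ_ℓ λ_ℓ s_ℓ` is at most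
the sum of the `n` largest `λ_ℓ`.
-/

open RealInnerProductSpace Matrix
open Finset

theorem sum_mul_le_sum_of_threshold {ι : Type*} [Fintype ι] (S : Finset ι) {lam s : ι → ℝ}
    {t : ℝ} (ht : 0 ≤ t) (hS : ∀ i ∈ S, t ≤ lam i) (hSc : ∀ i ∉ S, lam i ≤ t)
    (hs0 : ∀ i, 0 ≤ s i) (hs1 : ∀ i, s i ≤ 1) (hsum : ∑ i, s i ≤ #S) :
    ∑ i, lam i * s i ≤ ∑ i ∈ S, lam i := by
  classical
  have hpoint : ∀ i, lam i * s i ≤ (if i ∈ S then lam i - t else 0) + t * s i := by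
    intro i
    split_ifs with hi
    · nlinarith [hS i hi, hs1 i]
    · nlinarith [hSc i hi, hs0 i]
  calc ∑ i, lam i * s i ≤ ∑ i, ((if i ∈ S then lam i - t else 0) + t * s i) :=
        sum_le_sum fun i _ => hpoint i
    _ = ∑ i ∈ S, lam i - t * #S + t * ∑ i, s i := by
        rw [sum_add_distrib, sum_ite_mem, sum_sub_distrib, mul_sum]
        simp [mul_comm]
    _ ≤ ∑ i ∈ S, lam i := by nlinarith

theorem sum_mul_le_sum_castLE_of_antitone {m n : ℕ} (hnm : n ≤ m) {lam s : Fin m → ℝ}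
    (hlam : Antitone lam) (hlam0 : ∀ ℓ, 0 ≤ lam ℓ) (hs0 : ∀ ℓ, 0 ≤ s ℓ) (hs1 : ∀ ℓ, s ℓ ≤ 1)
    (hsum : ∑ ℓ, s ℓ ≤ n) :
    ∑ ℓ, lam ℓ * s ℓ ≤ ∑ i : Fin n, lam (Fin.castLE hnm i) := by
  rcases n.eq_zero_or_pos with rfl | hn
  · have hs : ∀ ℓ, s ℓ = 0 := fun ℓ =>
      (sum_eq_zero_iff_of_nonneg fun ℓ _ => hs0 ℓ).1
        (le_antisymm (by simpa using hsum) (sum_nonneg fun ℓ _ => hs0 ℓ)) ℓ (mem_univ ℓ)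
    simp [hs]
  have hS : ∀ ℓ : Fin m, ℓ ∈ univ.map (Fin.castLEEmb hnm) ↔ (ℓ : ℕ) < n := fun ℓ =>
    ⟨fun h => by obtain ⟨i, -, rfl⟩ := mem_map.1 h; exact i.isLt,
      fun h => mem_map.2 ⟨⟨ℓ, h⟩, mem_univ _, rfl⟩⟩
  refine (sum_mul_le_sum_of_threshold (univ.map (Fin.castLEEmb hnm))
    (t := lam ⟨n - 1, by omega⟩) (hlam0 _) ?_ ?_ hs0 hs1 (by simpa using hsum)).trans_eq
    (sum_map _ _ _)
  · exact fun ℓ hℓ => hlam <| Fin.le_def.2 <| show (ℓ : ℕ) ≤ n - 1 by rw [hS] at hℓ; omega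
  · exact fun ℓ hℓ => hlam <| Fin.le_def.2 <| show n - 1 ≤ (ℓ : ℕ) by rw [hS] at hℓ; omega

section InnerProductSpace

variable {H : Type*} [NormedAddCommGroup H] [InnerProductSpace ℝ H]

-- Terms with `v i = 0` are `0 / 0 = 0`.
theorem sum_inner_sq_div_norm_sq_le {ι : Type*} [Fintype ι] {v : ι → H}
    (hv : Pairwise fun i j => ⟪v i, v j⟫ = 0) (x : H) :
    ∑ i, ⟪v i, x⟫ ^ 2 / ‖v i‖ ^ 2 ≤ ‖x‖ ^ 2 := by
  classical
  let e : {i // v i ≠ 0} → H := fun i => ‖v i‖⁻¹ • v i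
  have he : Orthonormal ℝ e := by
    refine ⟨fun i => norm_smul_inv_norm i.2, fun i j hij => ?_⟩
    simp only [e, real_inner_smul_left, real_inner_smul_right, hv (Subtype.coe_ne_coe.2 hij),
      mul_zero]
  calc ∑ i, ⟪v i, x⟫ ^ 2 / ‖v i‖ ^ 2 = ∑ i ∈ univ with v i ≠ 0, ⟪v i, x⟫ ^ 2 / ‖v i‖ ^ 2 :=
        (sum_filter_of_ne (p := (v · ≠ 0)) fun i _ hi h0 => hi (by simp [h0])).symm
    _ = ∑ i ∈ univ.subtype (v · ≠ 0), ‖⟪e i, x⟫‖ ^ 2 := by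
        rw [← sum_subtype_eq_sum_filter]
        refine sum_congr rfl fun i _ => ?_
        rw [real_inner_smul_left, Real.norm_eq_abs, sq_abs]
        ring
    _ ≤ ‖x‖ ^ 2 := he.sum_inner_products_le x

theorem sum_sum_inner_sq_le_sum_norm_sq_castLE {m n : ℕ} (hnm : n ≤ m) {v : Fin m → H}
    (hv : Pairwise fun i j => ⟪v i, v j⟫ = 0) (hanti : Antitone fun ℓ => ‖v ℓ‖)
    {ψ : Fin n → H} (hψ : Orthonormal ℝ ψ) :
    ∑ ℓ, ∑ i, ⟪v ℓ, ψ i⟫ ^ 2 ≤ ∑ i : Fin n, ‖v (Fin.castLE hnm i)‖ ^ 2 := by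
  set s : Fin m → ℝ := fun ℓ => ∑ i, ⟪v ℓ, ψ i⟫ ^ 2 / ‖v ℓ‖ ^ 2
  have hsplit : ∀ ℓ, ∑ i, ⟪v ℓ, ψ i⟫ ^ 2 = ‖v ℓ‖ ^ 2 * s ℓ := by
    intro ℓ
    rcases eq_or_ne (v ℓ) 0 with h | h
    · simp [h]
    · rw [mul_sum]
      exact sum_congr rfl fun i _ => by field_simp
  have hs1 : ∀ ℓ, s ℓ ≤ 1 := by
    intro ℓ
    simp only [s, ← sum_div]
    refine div_le_one_of_le₀ ?_ (sq_nonneg _)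
    simpa only [real_inner_comm, Real.norm_eq_abs, sq_abs] using hψ.sum_inner_products_le (v ℓ)
  have hsum : ∑ ℓ, s ℓ ≤ n := by
    rw [sum_comm]
    calc ∑ i, ∑ ℓ, ⟪v ℓ, ψ i⟫ ^ 2 / ‖v ℓ‖ ^ 2 ≤ ∑ i : Fin n, ‖ψ i‖ ^ 2 :=
          sum_le_sum fun i _ => sum_inner_sq_div_norm_sq_le hv (ψ i)
      _ = n := by simp [hψ.1]
  simp_rw [hsplit]
  exact sum_mul_le_sum_castLE_of_antitone hnm
    (fun i j hij => pow_le_pow_left₀ (norm_nonneg _) (hanti hij) 2) (fun _ => sq_nonneg _)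
    (fun _ => sum_nonneg fun _ _ => by positivity) hs1 hsum

theorem sum_inner_sum_smul_sq_eq_of_mul_transpose_eq_one {ι : Type*} [Fintype ι] [DecidableEq ι]
    {C : Matrix ι ι ℝ} (hC : C * Cᵀ = 1) (u : ι → H) (x : H) :
    ∑ ℓ, ⟪∑ k, C ℓ k • u k, x⟫ ^ 2 = ∑ k, ⟪u k, x⟫ ^ 2 := by
  set a : ι → ℝ := fun k => ⟪u k, x⟫
  have hCa : ∀ ℓ, ⟪∑ k, C ℓ k • u k, x⟫ = (C *ᵥ a) ℓ := fun ℓ => by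
    simp only [sum_inner, real_inner_smul_left, mulVec, dotProduct, a]
  calc ∑ ℓ, ⟪∑ k, C ℓ k • u k, x⟫ ^ 2 = (C *ᵥ a) ⬝ᵥ (C *ᵥ a) := by
        simp only [hCa, dotProduct, sq]
    _ = a ⬝ᵥ a := by rw [dotProduct_mulVec, vecMul_mulVec, mul_eq_one_comm.1 hC, vecMul_one]
    _ = ∑ k, ⟪u k, x⟫ ^ 2 := by simp only [dotProduct, sq, a]

end InnerProductSpace

theorem captured_energy_le_sum_largest_eigenvalues_general
    {H : Type*} [NormedAddCommGroup H] [InnerProductSpace ℝ H]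
    (m : ℕ) (hm : 1 ≤ m) (u : Fin m → H)
    (U : Matrix (Fin m) (Fin m) ℝ)
    (hU : ∀ i j, U i j = (1 / (m : ℝ)) * ⟪u i, u j⟫)
    (c : Fin m → Fin m → ℝ) (lam : Fin m → ℝ)
    (horth : ∀ ℓ q, c ℓ ⬝ᵥ c q = if ℓ = q then 1 else 0)
    (heig : ∀ ℓ, U.mulVec (c ℓ) = lam ℓ • c ℓ)
    (hdecr : ∀ i j : Fin m, i ≤ j → lam j ≤ lam i)
    (n : ℕ) (hnm : n ≤ m)
    (ψ : Fin n → H)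
    (hψ : ∀ i j, ⟪ψ i, ψ j⟫ = if i = j then 1 else 0) :
    (1 / (m : ℝ)) * ∑ k, ∑ i, ⟪u k, ψ i⟫ ^ 2
      ≤ ∑ i : Fin n, lam (Fin.castLE hnm i) := by
  have hm' : (m : ℝ) ≠ 0 := Nat.cast_ne_zero.2 (by omega)
  have hC : of c * (of c)ᵀ = 1 := by
    ext ℓ q
    simpa [mul_apply, one_apply, dotProduct] using horth ℓ q
  set v : Fin m → H := fun ℓ => ∑ k, c ℓ k • u k
  have hgram : gram ℝ u = (m : ℝ) • U := by
    ext i j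
    simp [gram, hU, hm']
  have hvv : ∀ ℓ q, ⟪v ℓ, v q⟫ = m * lam q * if ℓ = q then 1 else 0 := fun ℓ q => by
    rw [← star_dotProduct_gram_mulVec, star_trivial, hgram, smul_mulVec, heig,
      dotProduct_smul, dotProduct_smul, horth, smul_eq_mul, smul_eq_mul, mul_assoc]
  have hnorm : ∀ ℓ, ‖v ℓ‖ ^ 2 = m * lam ℓ := fun ℓ => by
    rw [← real_inner_self_eq_norm_sq, hvv, if_pos rfl, mul_one]
  have hanti : Antitone fun ℓ => ‖v ℓ‖ := fun i j hij => by
    rw [← pow_le_pow_iff_left₀ (norm_nonneg _) (norm_nonneg _) two_ne_zero, hnorm, hnorm]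
    exact mul_le_mul_of_nonneg_left (hdecr i j hij) (Nat.cast_nonneg m)
  calc (1 / (m : ℝ)) * ∑ k, ∑ i, ⟪u k, ψ i⟫ ^ 2 = (1 / m) * ∑ ℓ, ∑ i, ⟪v ℓ, ψ i⟫ ^ 2 := by
        rw [sum_comm, sum_comm (γ := Fin m)]
        exact congrArg _ <| sum_congr rfl fun i _ =>
          (sum_inner_sum_smul_sq_eq_of_mul_transpose_eq_one hC u (ψ i)).symm
    _ ≤ (1 / m) * ∑ i : Fin n, ‖v (Fin.castLE hnm i)‖ ^ 2 := by
        gcongr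
        exact sum_sum_inner_sq_le_sum_norm_sq_castLE hnm (fun ℓ q h => by simp [hvv, h]) hanti
          (orthonormal_iff_ite.2 hψ)
    _ = ∑ i : Fin n, lam (Fin.castLE hnm i) := by
        simp only [hnorm, mul_sum]
        exact sum_congr rfl fun i _ => by field_simp

/-- Captured-energy bound: if the Gram matrix `U_{ij} = (1/m)⟨u_i, u_j⟩` has an
orthonormal eigenbasis `c_1, …, c_m` with eigenvalues `λ_1 ≥ … ≥ λ_m` listed in
decreasing order, then for every `n` with `1 ≤ n ≤ m` and every orthonormal
family `ψ_1, …, ψ_n` in `H`, the captured energy satisfies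
`(1/m) Σ_k Σ_i ⟨u_k, ψ_i⟩² ≤ Σ_{i=1}^n λ_i`. -/
theorem captured_energy_le_sum_largest_eigenvalues
    {H : Type*} [NormedAddCommGroup H] [InnerProductSpace ℝ H]
    (m : ℕ) (hm : 1 ≤ m) (u : Fin m → H)
    (U : Matrix (Fin m) (Fin m) ℝ)
    (hU : ∀ i j, U i j = (1 / (m : ℝ)) * ⟪u i, u j⟫)
    (c : Fin m → Fin m → ℝ) (lam : Fin m → ℝ)
    (horth : ∀ ℓ q, c ℓ ⬝ᵥ c q = if ℓ = q then 1 else 0)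
    (heig : ∀ ℓ, U.mulVec (c ℓ) = lam ℓ • c ℓ)
    (hdecr : ∀ i j : Fin m, i ≤ j → lam j ≤ lam i)
    (n : ℕ) (hn : 1 ≤ n) (hnm : n ≤ m)
    (ψ : Fin n → H)
    (hψ : ∀ i j, ⟪ψ i, ψ j⟫ = if i = j then 1 else 0) :
    (1 / (m : ℝ)) * ∑ k, ∑ i, ⟪u k, ψ i⟫ ^ 2
      ≤ ∑ i : Fin n, lam (Fin.castLE hnm i) :=
  captured_energy_le_sum_largest_eigenvalues_general m hm u U hU c lam horth heig hdecr n hnm ψ hψ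
end

section
/- Let H be a real inner product space, m ≥ 1, u_1, …, u_m ∈ H, and U the Gram matrix U_{ij} = (1/m)⟨u_i, u_j⟩. Suppose c_1, …, c_m is an orthonormal basis of ℝ^m of eigenvectors of U with eigenvalues λ_1 ≥ λ_2 ≥ … ≥ λ_m, and let 1 ≤ n ≤ m be such that λ_n > 0. Define the POD modes φ_ℓ = (m λ_ℓ)^{-1/2} Σ_{j=1}^m (c_ℓ)_j u_j for ℓ = 1, …, n. Then the mean-square reconstruction error achieved by the first n POD modes equals exactly the sum of the discarded eigenvalues: (1/m) Σ_{k=1}^m ‖u_k − Σ_{i=1}^n ⟨u_k, φ_i⟩ φ_i‖² = Σ_{ℓ=n+1}^m λ_ℓ. In particular, together with the lower bound over all orthonormal families, the POD modes minimize the mean-square reconstruction error. -/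
/-!
Write `w ℓ = ∑ j, c ℓ j • u j`. The eigenvalue equation gives `⟪u k, w ℓ⟫ = m λ_ℓ c ℓ k` and
`‖w ℓ‖² = m λ_ℓ`, so `φ_ℓ = w ℓ / ‖w ℓ‖` and the term `⟪u k, φ_ℓ⟫ φ_ℓ` is just `c ℓ k • w ℓ`
(both sides vanish when `w ℓ = 0`). Since the rows `c ℓ` are orthonormal, the matrix `(c ℓ j)` is
orthogonal, so `u k = ∑ ℓ, c ℓ k • w ℓ` and the residual of `u k` is `∑_{ℓ ≥ n} c ℓ k • w ℓ`.
Orthonormality once more turns the sum over `k` of its squared norms into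
`∑_{ℓ ≥ n} ‖w ℓ‖² = m ∑_{ℓ ≥ n} λ_ℓ`.
-/

open RealInnerProductSpace Matrix Finset

/-- The POD mode associated to an eigenpair `(lam, c)` of the Gram matrix of the
snapshots `u`: `φ = (m·lam)^(-1/2) Σ_j c_j u_j`. -/
noncomputable def podMode {H : Type*} [NormedAddCommGroup H] [InnerProductSpace ℝ H]
    {m : ℕ} (u : Fin m → H) (lam : ℝ) (c : Fin m → ℝ) : H :=
  (Real.sqrt (m * lam))⁻¹ • ∑ j, c j • u j

theorem Fin.sum_castLE_eq_sum_filter_not_le {M : Type*} [AddCommMonoid M] {n m : ℕ} (h : n ≤ m)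
    (f : Fin m → M) :
    ∑ i : Fin n, f (Fin.castLE h i) = ∑ ℓ ∈ univ.filter (fun ℓ : Fin m => ¬ n ≤ (ℓ : ℕ)), f ℓ := by
  rw [← Fin.coe_castLEEmb h, ← sum_map]
  congr 1
  ext ℓ
  simp only [mem_map, mem_univ, true_and, Fin.coe_castLEEmb, mem_filter, not_le]
  exact ⟨by rintro ⟨i, rfl⟩; exact i.isLt, fun hℓ => ⟨⟨ℓ, hℓ⟩, rfl⟩⟩

section OrthonormalRows

variable {ι : Type*} [Fintype ι] [DecidableEq ι]

theorem sum_mul_eq_ite_of_dotProduct_eq_ite {R : Type*} [CommRing R] {c : ι → ι → R}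
    (h : ∀ ℓ q, c ℓ ⬝ᵥ c q = if ℓ = q then 1 else 0) (j k : ι) :
    ∑ ℓ, c ℓ j * c ℓ k = if j = k then 1 else 0 := by
  have hC : of c * (of c)ᵀ = 1 := by
    ext ℓ q
    simpa [mul_apply, dotProduct, one_apply] using h ℓ q
  have hCt : (of c)ᵀ * of c = 1 := mul_eq_one_comm.mp hC
  simpa [mul_apply, one_apply] using congr_fun₂ hCt j k

theorem sum_smul_sum_smul_eq_self_of_dotProduct_eq_ite {R M : Type*} [CommRing R] [AddCommMonoid M]
    [Module R M] {c : ι → ι → R} (h : ∀ ℓ q, c ℓ ⬝ᵥ c q = if ℓ = q then 1 else 0)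
    (u : ι → M) (k : ι) :
    ∑ ℓ, c ℓ k • ∑ j, c ℓ j • u j = u k := by
  simp_rw [smul_sum, smul_smul]
  rw [sum_comm]
  simp_rw [← sum_smul, sum_mul_eq_ite_of_dotProduct_eq_ite h, ite_smul, one_smul, zero_smul,
    sum_ite_eq, mem_univ, if_true]

end OrthonormalRows

theorem sum_norm_sq_sum_smul_of_dotProduct_eq_ite {ι κ H : Type*} [Fintype κ] [DecidableEq ι]
    [NormedAddCommGroup H] [InnerProductSpace ℝ H] {c : ι → κ → ℝ}
    (h : ∀ ℓ q, c ℓ ⬝ᵥ c q = if ℓ = q then 1 else 0) (s : Finset ι) (w : ι → H) :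
    ∑ k, ‖∑ ℓ ∈ s, c ℓ k • w ℓ‖ ^ 2 = ∑ ℓ ∈ s, ‖w ℓ‖ ^ 2 := by
  calc ∑ k, ‖∑ ℓ ∈ s, c ℓ k • w ℓ‖ ^ 2
      = ∑ ℓ ∈ s, ∑ q ∈ s, (c ℓ ⬝ᵥ c q) * ⟪w ℓ, w q⟫ := by
        simp_rw [← real_inner_self_eq_norm_sq, sum_inner, inner_sum, real_inner_smul_left,
          real_inner_smul_right, dotProduct, sum_mul]
        rw [sum_comm]
        refine sum_congr rfl fun ℓ _ => ?_
        rw [sum_comm]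
        simp_rw [mul_assoc]
    _ = ∑ ℓ ∈ s, ‖w ℓ‖ ^ 2 := by
        simp [h]

theorem inner_inv_norm_smul_smul_inv_norm_smul {H : Type*} [NormedAddCommGroup H]
    [InnerProductSpace ℝ H] {x w : H} {t : ℝ} (h : ⟪x, w⟫ = t * ‖w‖ ^ 2) :
    ⟪x, ‖w‖⁻¹ • w⟫ • (‖w‖⁻¹ • w) = t • w := by
  rcases eq_or_ne w 0 with rfl | hw
  · simp
  · rw [real_inner_smul_right, h, smul_smul]
    congr 1
    field_simp

section Gram

variable {H : Type*} [NormedAddCommGroup H] [InnerProductSpace ℝ H] {m : ℕ} {u : Fin m → H}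

theorem podMode_eq_inv_norm_smul {lam : ℝ} {c : Fin m → ℝ}
    (h : ‖∑ j, c j • u j‖ ^ 2 = m * lam) :
    podMode u lam c = ‖∑ j, c j • u j‖⁻¹ • ∑ j, c j • u j := by
  rw [podMode, ← h, Real.sqrt_sq (norm_nonneg _)]

variable {U : Matrix (Fin m) (Fin m) ℝ} (hU : ∀ i j, U i j = (1 / (m : ℝ)) * ⟪u i, u j⟫)
include hU

theorem inner_sum_smul_eq_mul_mulVec (c : Fin m → ℝ) (k : Fin m) :
    ⟪u k, ∑ j, c j • u j⟫ = m * (U *ᵥ c) k := by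
  have hm : (m : ℝ) ≠ 0 := by exact_mod_cast k.pos.ne'
  simp_rw [inner_sum, real_inner_smul_right, mulVec, dotProduct, hU, mul_sum]
  refine sum_congr rfl fun j _ => ?_
  field_simp

variable {c : Fin m → ℝ} {lam : ℝ} (hc : U *ᵥ c = lam • c)
include hc

theorem norm_sq_sum_smul_of_mulVec_eq_smul (hc1 : c ⬝ᵥ c = 1) :
    ‖∑ j, c j • u j‖ ^ 2 = m * lam := by
  calc ‖∑ j, c j • u j‖ ^ 2 = ∑ k, c k * (m * (U *ᵥ c) k) := by
        simp_rw [← real_inner_self_eq_norm_sq, sum_inner, real_inner_smul_left,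
          inner_sum_smul_eq_mul_mulVec hU]
    _ = m * lam * (c ⬝ᵥ c) := by
        simp_rw [hc, dotProduct, mul_sum, Pi.smul_apply, smul_eq_mul]
        exact sum_congr rfl fun k _ => by ring
    _ = m * lam := by rw [hc1, mul_one]

theorem inner_podMode_smul_podMode (hc1 : c ⬝ᵥ c = 1) (k : Fin m) :
    ⟪u k, podMode u lam c⟫ • podMode u lam c = c k • ∑ j, c j • u j := by
  have hnorm := norm_sq_sum_smul_of_mulVec_eq_smul hU hc hc1
  rw [podMode_eq_inv_norm_smul hnorm]
  refine inner_inv_norm_smul_smul_inv_norm_smul ?_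
  rw [inner_sum_smul_eq_mul_mulVec hU, hc, hnorm, Pi.smul_apply, smul_eq_mul]
  ring

end Gram

/-- Optimality of POD: if the Gram matrix `U_{ij} = (1/m)⟨u_i, u_j⟩` has an
orthonormal eigenbasis `c_1, …, c_m` with eigenvalues `λ_1 ≥ … ≥ λ_m` listed in
decreasing order and `λ_n > 0`, then the mean-square reconstruction error
achieved by the first `n` POD modes `φ_ℓ = (m λ_ℓ)^(-1/2) Σ_j (c_ℓ)_j u_j`
equals exactly the sum of the discarded eigenvalues:
`(1/m) Σ_k ‖u_k − Σ_{i=1}^n ⟨u_k, φ_i⟩ φ_i‖² = Σ_{ℓ=n+1}^m λ_ℓ`. -/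
theorem podModes_reconstruction_error_eq_sum_discarded_eigenvalues
    {H : Type*} [NormedAddCommGroup H] [InnerProductSpace ℝ H]
    (m : ℕ) (u : Fin m → H)
    (U : Matrix (Fin m) (Fin m) ℝ)
    (hU : ∀ i j, U i j = (1 / (m : ℝ)) * ⟪u i, u j⟫)
    (c : Fin m → Fin m → ℝ) (lam : Fin m → ℝ)
    (horth : ∀ ℓ q, c ℓ ⬝ᵥ c q = if ℓ = q then 1 else 0)
    (heig : ∀ ℓ, U.mulVec (c ℓ) = lam ℓ • c ℓ)
    (n : ℕ) (hnm : n ≤ m) :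
    (1 / (m : ℝ)) * ∑ k,
        ‖u k - ∑ i : Fin n,
            ⟪u k, podMode u (lam (Fin.castLE hnm i)) (c (Fin.castLE hnm i))⟫ •
              podMode u (lam (Fin.castLE hnm i)) (c (Fin.castLE hnm i))‖ ^ 2
      = ∑ ℓ ∈ Finset.univ.filter (fun ℓ : Fin m => n ≤ (ℓ : ℕ)), lam ℓ := by
  have hunit : ∀ ℓ, c ℓ ⬝ᵥ c ℓ = 1 := fun ℓ => by simpa using horth ℓ ℓ
  have hresidual : ∀ k, u k - ∑ i : Fin n,
      ⟪u k, podMode u (lam (Fin.castLE hnm i)) (c (Fin.castLE hnm i))⟫ •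
        podMode u (lam (Fin.castLE hnm i)) (c (Fin.castLE hnm i))
      = ∑ ℓ ∈ univ.filter (fun ℓ : Fin m => n ≤ (ℓ : ℕ)), c ℓ k • ∑ j, c ℓ j • u j := by
    intro k
    simp_rw [inner_podMode_smul_podMode hU (heig _) (hunit _)]
    rw [Fin.sum_castLE_eq_sum_filter_not_le hnm (fun ℓ => c ℓ k • ∑ j, c ℓ j • u j),
      sub_eq_iff_eq_add, sum_filter_add_sum_filter_not,
      sum_smul_sum_smul_eq_self_of_dotProduct_eq_ite horth]
  simp_rw [hresidual]
  rw [sum_norm_sq_sum_smul_of_dotProduct_eq_ite horth]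
  simp_rw [norm_sq_sum_smul_of_mulVec_eq_smul hU (heig _) (hunit _)]
  rcases m.eq_zero_or_pos with rfl | hm
  · simp
  · rw [← mul_sum, ← mul_assoc, one_div_mul_cancel (by positivity), one_mul]
end
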